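/- arXiv:2501.17370 — 6 statements merged into one kernel-verified Lean document; each statement's English description precedes it below -/
import Mathlib

section
/- For every r ≥ 0, if U_{r+1} = U_r, then H_{r+1} ≥ (451/450)·H_r. -/
/-!
Batched best arm identification in multi-armed bandits (Definition 1.1 / Theorem 3.1).

STATEMENT 1: for every `r ≥ 0`, if `U (r+1) = U r` then `H (r+1) ≥ (451/450) * H r`.
-/
theorem Hr_geometric_growth
    (n : ℕ) (hn : 2 ≤ n)
    (Δ : ℕ → ℝ)
    (hΔpos : ∀ i ∈ Finset.Icc 2 n, 0 < Δ i)
    (hΔmono : ∀ i ∈ Finset.Icc 2 n, ∀ j ∈ Finset.Icc 2 n, i ≤ j → Δ i ≤ Δ j)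
    (Lbar : ℕ → ℝ) (U : ℕ → Finset ℕ) (H : ℕ → ℝ)
    (hL0 : Lbar 0 = 1) (hU0 : U 0 = ∅)
    (hL : ∀ r, Lbar (r + 1)
      = 4 * Lbar r + (1 / ((n : ℝ) - (U r).card)) * ∑ j ∈ U r, 1 / (Δ j) ^ 2)
    (hU : ∀ r, U (r + 1)
      = (Finset.Icc 2 n).filter
          (fun j => 15 * Real.sqrt 2 / Real.sqrt (Lbar (r + 1)) ≤ Δ j))
    (hH : ∀ r, H r
      = Lbar r * ((n : ℝ) - (U r).card) + ∑ j ∈ U r, 450 / (Δ j) ^ 2) :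
    ∀ r : ℕ, U (r + 1) = U r → (451 / 450 : ℝ) * H r ≤ H (r + 1) := by
  -- card bound: (U r).card < n for all r
  have hcard : ∀ r, (U r).card < n := by
    intro r
    cases r with
    | zero => simp [hU0]; omega
    | succ r =>
        have hsub : U (r + 1) ⊆ Finset.Icc 2 n := by
          rw [hU r]; exact Finset.filter_subset _ _
        have := Finset.card_le_card hsub
        rw [Nat.card_Icc] at this
        omega
  have hcpos : ∀ r, (0 : ℝ) < (n : ℝ) - (U r).card := by
    intro r
    have := hcard r
    have : ((U r).card : ℝ) < n := by exact_mod_cast this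
    linarith
  have hSnn : ∀ r, (0 : ℝ) ≤ ∑ j ∈ U r, 1 / (Δ j) ^ 2 := by
    intro r
    apply Finset.sum_nonneg
    intro j _
    positivity
  have hLpos : ∀ r, 0 < Lbar r := by
    intro r
    induction r with
    | zero => rw [hL0]; norm_num
    | succ r ih =>
        rw [hL r]
        have h1 : (0:ℝ) ≤ 1 / ((n : ℝ) - (U r).card) :=
          le_of_lt (one_div_pos.mpr (hcpos r))
        have := mul_nonneg h1 (hSnn r)
        linarith
  intro r hUeq
  rw [hH r, hH (r + 1), hUeq]
  have hc := hcpos r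
  have hcne : ((n : ℝ) - (U r).card) ≠ 0 := ne_of_gt hc
  have hLsum : Lbar (r + 1) * ((n : ℝ) - (U r).card)
      = 4 * Lbar r * ((n : ℝ) - (U r).card) + ∑ j ∈ U r, 1 / (Δ j) ^ 2 := by
    rw [hL r]
    field_simp
  rw [hLsum]
  have hS450 : ∑ j ∈ U r, 450 / (Δ j) ^ 2 = 450 * ∑ j ∈ U r, 1 / (Δ j) ^ 2 := by
    rw [Finset.mul_sum]
    apply Finset.sum_congr rfl
    intro j _
    ring
  rw [hS450]
  have hLc : 0 < Lbar r * ((n : ℝ) - (U r).card) := mul_pos (hLpos r) hc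
  nlinarith [hSnn r]
end

section
/- Let (L_r)_{r≥1} be a sequence of positive reals and (V_r)_{r≥1} a sequence of subsets of {2,…,n} satisfying: (i) L₁ ≥ 4; (ii) for every r ≥ 1, {j ∈ {2,…,n} : Δ_j ≥ 15√2/√(L_r)} ⊆ V_r; and (iii) for every r ≥ 1, L_{r+1} ≥ 4·L_r + (1/(n − |V_r|))·∑_{j ∈ V_r} 1/Δ_j². Then for every r ≥ 1, L_r ≥ L̄_r and U_r ⊆ V_r. In particular, the least r with V_r = {2,…,n} is at most R_I. -/
/-!
Batched best arm identification in multi-armed bandits (Definition 1.1).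

STATEMENT 4 (deterministic induction lemma): let `(L r)_{r ≥ 1}` be positive reals
and `(V r)_{r ≥ 1}` subsets of `{2,…,n}` with `L 1 ≥ 4`,
`{j ∈ {2,…,n} : Δ j ≥ 15√2/√(L r)} ⊆ V r` for all `r ≥ 1`, and
`L (r+1) ≥ 4 L r + (1/(n - |V r|)) ∑_{j ∈ V r} 1/Δⱼ²` for all `r ≥ 1`.
Then `L r ≥ L̄ r` and `U r ⊆ V r` for all `r ≥ 1`; in particular the least `r`
with `V r = {2,…,n}` is at most `R`.
-/
theorem domination_lemma
    (n : ℕ) (hn : 2 ≤ n)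
    (Δ : ℕ → ℝ)
    (hΔpos : ∀ i ∈ Finset.Icc 2 n, 0 < Δ i)
    (hΔmono : ∀ i ∈ Finset.Icc 2 n, ∀ j ∈ Finset.Icc 2 n, i ≤ j → Δ i ≤ Δ j)
    (Lbar : ℕ → ℝ) (U : ℕ → Finset ℕ)
    (hL0 : Lbar 0 = 1) (hU0 : U 0 = ∅)
    (hLrec : ∀ r, Lbar (r + 1)
      = 4 * Lbar r + (1 / ((n : ℝ) - (U r).card)) * ∑ j ∈ U r, 1 / (Δ j) ^ 2)
    (hUrec : ∀ r, U (r + 1)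
      = (Finset.Icc 2 n).filter
          (fun j => 15 * Real.sqrt 2 / Real.sqrt (Lbar (r + 1)) ≤ Δ j))
    (R : ℕ)
    (hRmem : U R = Finset.Icc 2 n)
    (hRleast : ∀ r < R, U r ≠ Finset.Icc 2 n)
    (L : ℕ → ℝ) (V : ℕ → Finset ℕ)
    (hLpos : ∀ r, 1 ≤ r → 0 < L r)
    (hVsub : ∀ r, 1 ≤ r → V r ⊆ Finset.Icc 2 n)
    (hL1 : 4 ≤ L 1)
    (hVcontains : ∀ r, 1 ≤ r →
      (Finset.Icc 2 n).filter (fun j => 15 * Real.sqrt 2 / Real.sqrt (L r) ≤ Δ j) ⊆ V r)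
    (hLgrow : ∀ r, 1 ≤ r →
      4 * L r + (1 / ((n : ℝ) - (V r).card)) * ∑ j ∈ V r, 1 / (Δ j) ^ 2 ≤ L (r + 1)) :
    (∀ r, 1 ≤ r → Lbar r ≤ L r ∧ U r ⊆ V r)
    ∧ sInf {r : ℕ | 1 ≤ r ∧ V r = Finset.Icc 2 n} ≤ R := by
  have hIccCard : (Finset.Icc 2 n).card = n - 1 := by rw [Nat.card_Icc]; omega
  have hUsub : ∀ r, U r ⊆ Finset.Icc 2 n := by
    intro r
    cases r with
    | zero => simp [hU0]
    | succ r => rw [hUrec]; exact Finset.filter_subset _ _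
  have hcardU : ∀ r, ((U r).card : ℝ) < n := by
    intro r
    have h := Finset.card_le_card (hUsub r)
    rw [hIccCard] at h
    exact_mod_cast by omega
  have hcardV : ∀ r, 1 ≤ r → ((V r).card : ℝ) < n := by
    intro r hr
    have h := Finset.card_le_card (hVsub r hr)
    rw [hIccCard] at h
    exact_mod_cast by omega
  have htermU : ∀ r, 0 ≤ (1 / ((n : ℝ) - (U r).card)) * ∑ j ∈ U r, 1 / (Δ j) ^ 2 := by
    intro r
    apply mul_nonneg
    · exact div_nonneg zero_le_one (by linarith [hcardU r])
    · exact Finset.sum_nonneg fun j _ => by positivity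
  have hLbarpos : ∀ r, 0 < Lbar r := by
    intro r
    induction r with
    | zero => simp [hL0]
    | succ r ih =>
      rw [hLrec]
      have := htermU r
      linarith
  have key : ∀ r, 1 ≤ r → Lbar r ≤ L r ∧ U r ⊆ V r := by
    intro r hr
    induction r with
    | zero => omega
    | succ r ih =>
      have hLle : Lbar (r + 1) ≤ L (r + 1) := by
        rcases Nat.eq_zero_or_pos r with hr0 | hr1
        · subst hr0
          rw [hLrec, hL0, hU0]
          simp only [Finset.sum_empty, mul_zero, add_zero]
          linarith
        · obtain ⟨hL', hU'⟩ := ih hr1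
          have hsum : ∑ j ∈ U r, 1 / (Δ j) ^ 2 ≤ ∑ j ∈ V r, 1 / (Δ j) ^ 2 :=
            Finset.sum_le_sum_of_subset_of_nonneg hU' (fun j _ _ => by positivity)
          have hcard : ((U r).card : ℝ) ≤ (V r).card := by
            exact_mod_cast Finset.card_le_card hU'
          have hVpos : (0 : ℝ) < (n : ℝ) - (V r).card := by linarith [hcardV r hr1]
          have hcoef : 1 / ((n : ℝ) - (U r).card) ≤ 1 / ((n : ℝ) - (V r).card) :=
            one_div_le_one_div_of_le hVpos (by linarith)
          have hterm : (1 / ((n : ℝ) - (U r).card)) * ∑ j ∈ U r, 1 / (Δ j) ^ 2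
              ≤ (1 / ((n : ℝ) - (V r).card)) * ∑ j ∈ V r, 1 / (Δ j) ^ 2 := by
            apply mul_le_mul hcoef hsum
            · exact Finset.sum_nonneg fun j _ => by positivity
            · exact le_of_lt (div_pos one_pos hVpos)
          have := hLgrow r hr1
          rw [hLrec]
          linarith
      refine ⟨hLle, ?_⟩
      intro j hj
      rw [hUrec] at hj
      obtain ⟨hjmem, hjineq⟩ := Finset.mem_filter.mp hj
      apply hVcontains (r + 1) (by omega)
      refine Finset.mem_filter.mpr ⟨hjmem, ?_⟩
      have hsq : Real.sqrt (Lbar (r + 1)) ≤ Real.sqrt (L (r + 1)) := Real.sqrt_le_sqrt hLle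
      have hsqpos : 0 < Real.sqrt (Lbar (r + 1)) := Real.sqrt_pos.mpr (hLbarpos (r + 1))
      have : 15 * Real.sqrt 2 / Real.sqrt (L (r + 1))
          ≤ 15 * Real.sqrt 2 / Real.sqrt (Lbar (r + 1)) :=
        div_le_div_of_nonneg_left (by positivity) hsqpos hsq
      linarith
  refine ⟨key, ?_⟩
  have hR1 : 1 ≤ R := by
    rcases Nat.eq_zero_or_pos R with h0 | h1
    · exfalso
      rw [h0, hU0] at hRmem
      have : (2 : ℕ) ∈ Finset.Icc 2 n := Finset.mem_Icc.mpr ⟨le_refl 2, hn⟩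
      rw [← hRmem] at this
      exact absurd this (Finset.notMem_empty 2)
    · exact h1
  apply Nat.sInf_le
  refine ⟨hR1, Finset.Subset.antisymm (hVsub R hR1) ?_⟩
  rw [← hRmem]
  exact (key R hR1).2
end

section
/- For every n ≥ 5, the instance with gaps Δ₂ = 1/√n and Δ_i = 1/2 for every i ∈ {3,…,n} satisfies R_I ≤ 12. In particular, for this family of instances (Example 1 of the paper) the instance-sensitive batch complexity R_I is bounded by an absolute constant, while log(1/Δ₂) = (1/2)·log n grows with n. -/
/-!
Batched best arm identification in multi-armed bandits (Definition 1.1, Example 1).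

STATEMENT 5: for every `n ≥ 5`, the instance with gaps `Δ 2 = 1/√n` and
`Δ i = 1/2` for `i ∈ {3,…,n}` satisfies `R ≤ 12`, while
`log(1/Δ₂) = (1/2) log n` grows with `n`.
-/
theorem example_one_constant_batches
    (n : ℕ) (hn : 5 ≤ n)
    (Δ : ℕ → ℝ)
    (hΔ2 : Δ 2 = 1 / Real.sqrt n)
    (hΔi : ∀ i ∈ Finset.Icc 3 n, Δ i = 1 / 2)
    (Lbar : ℕ → ℝ) (U : ℕ → Finset ℕ)
    (hL0 : Lbar 0 = 1) (hU0 : U 0 = ∅)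
    (hL : ∀ r, Lbar (r + 1)
      = 4 * Lbar r + (1 / ((n : ℝ) - (U r).card)) * ∑ j ∈ U r, 1 / (Δ j) ^ 2)
    (hU : ∀ r, U (r + 1)
      = (Finset.Icc 2 n).filter
          (fun j => 15 * Real.sqrt 2 / Real.sqrt (Lbar (r + 1)) ≤ Δ j))
    (R : ℕ)
    (hRmem : U R = Finset.Icc 2 n)
    (hRleast : ∀ r < R, U r ≠ Finset.Icc 2 n) :
    R ≤ 12 ∧ Real.logb 2 (1 / Δ 2) = (1 / 2) * Real.logb 2 n := by
  have hn5 : (5 : ℝ) ≤ (n : ℝ) := by exact_mod_cast hn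
  -- U r ⊆ Icc 2 n
  have hUsub : ∀ r, U r ⊆ Finset.Icc 2 n := by
    intro r
    cases r with
    | zero => rw [hU0]; exact Finset.empty_subset _
    | succ k => rw [hU k]; exact Finset.filter_subset _ _
  have hcardIcc2 : (Finset.Icc 2 n).card = n - 1 := by
    rw [Nat.card_Icc]; omega
  have hcardIcc3 : (Finset.Icc 3 n).card = n - 2 := by
    rw [Nat.card_Icc]; omega
  -- (n : ℝ) - card (U r) ≥ 1
  have hgap : ∀ r, (1 : ℝ) ≤ (n : ℝ) - (U r).card := by
    intro r
    have h1 : (U r).card ≤ n - 1 := hcardIcc2 ▸ Finset.card_le_card (hUsub r)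
    have h2 : (U r).card ≤ n - 1 := h1
    have : ((U r).card : ℝ) ≤ (n : ℝ) - 1 := by
      have : (U r).card + 1 ≤ n := by omega
      have := (Nat.cast_le (α := ℝ)).2 this
      push_cast at this; linarith
    linarith
  -- the additive term is nonneg
  have hterm : ∀ r, 0 ≤ (1 / ((n : ℝ) - (U r).card)) * ∑ j ∈ U r, 1 / (Δ j) ^ 2 := by
    intro r
    apply mul_nonneg
    · have := hgap r; positivity
    · apply Finset.sum_nonneg
      intro j _
      positivity
  -- Lbar grows by factor 4
  have hmono : ∀ r, 4 * Lbar r ≤ Lbar (r + 1) := by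
    intro r; rw [hL r]; linarith [hterm r]
  have hL1 : ∀ r, 1 ≤ Lbar r := by
    intro r
    induction r with
    | zero => rw [hL0]
    | succ k ih => linarith [hmono k]
  have hL6 : (4096 : ℝ) ≤ Lbar 6 := by
    have h0 := hmono 0
    have h1 := hmono 1
    have h2 := hmono 2
    have h3 := hmono 3
    have h4 := hmono 4
    have h5 := hmono 5
    rw [hL0] at h0
    linarith
  -- if Lbar r ≥ 1800 and r ≥ 1 then Icc 3 n ⊆ U r
  have hsub3 : ∀ r, (1800 : ℝ) ≤ Lbar (r + 1) → Finset.Icc 3 n ⊆ U (r + 1) := by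
    intro r hr
    rw [hU r]
    intro j hj
    have hj2 : j ∈ Finset.Icc 2 n := by
      simp only [Finset.mem_Icc] at hj ⊢; omega
    rw [Finset.mem_filter]
    refine ⟨hj2, ?_⟩
    rw [hΔi j hj]
    have hLpos : (0 : ℝ) < Lbar (r + 1) := by linarith [hL1 (r + 1)]
    have hsL : (0 : ℝ) < Real.sqrt (Lbar (r + 1)) := Real.sqrt_pos.2 hLpos
    rw [div_le_iff₀ hsL]
    have h1800 : Real.sqrt 1800 ≤ Real.sqrt (Lbar (r + 1)) := Real.sqrt_le_sqrt hr
    have heq : Real.sqrt 1800 = 30 * Real.sqrt 2 := by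
      rw [show (1800 : ℝ) = 30 ^ 2 * 2 by norm_num, Real.sqrt_mul (by positivity),
        Real.sqrt_sq (by norm_num)]
    linarith
  -- Lbar r ≥ 1800 for r ≥ 6
  have hL7 : ∀ r, 6 ≤ r → (1800 : ℝ) ≤ Lbar r := by
    intro r hr
    induction r with
    | zero => omega
    | succ k ih =>
      rcases Nat.lt_or_ge k 6 with h | h
      · interval_cases k <;> first | omega | linarith [hL6]
      · have := ih h
        linarith [hmono k, hL1 k]
  -- step lemma: once Icc 3 n ⊆ U r, the additive term is ≥ 2(n-2)
  have hstep : ∀ r, Finset.Icc 3 n ⊆ U r → 4 * Lbar r + 2 * ((n : ℝ) - 2) ≤ Lbar (r + 1) := by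
    intro r hr
    rw [hL r]
    have hsum : 4 * ((n : ℝ) - 2) ≤ ∑ j ∈ U r, 1 / (Δ j) ^ 2 := by
      have h1 : ∑ j ∈ Finset.Icc 3 n, 1 / (Δ j) ^ 2 ≤ ∑ j ∈ U r, 1 / (Δ j) ^ 2 := by
        apply Finset.sum_le_sum_of_subset_of_nonneg hr
        intro j _ _; positivity
      have h2 : ∑ j ∈ Finset.Icc 3 n, 1 / (Δ j) ^ 2 = 4 * ((n : ℝ) - 2) := by
        rw [Finset.sum_congr rfl (fun j hj => by rw [hΔi j hj])]
        rw [Finset.sum_const, hcardIcc3]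
        have : ((n - 2 : ℕ) : ℝ) = (n : ℝ) - 2 := by
          have : (2 : ℕ) ≤ n := by omega
          push_cast [Nat.cast_sub this]; ring
        rw [nsmul_eq_mul, this]; ring
      linarith
    have hcard : ((U r).card : ℝ) ≥ (n : ℝ) - 2 := by
      have h1 : n - 2 ≤ (U r).card := hcardIcc3 ▸ Finset.card_le_card hr
      have : ((n - 2 : ℕ) : ℝ) ≤ ((U r).card : ℝ) := by exact_mod_cast h1
      have h2 : ((n - 2 : ℕ) : ℝ) = (n : ℝ) - 2 := by
        have h3 : (2 : ℕ) ≤ n := by omega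
        push_cast [Nat.cast_sub h3]; ring
      linarith
    have hgapr := hgap r
    have hub : (n : ℝ) - (U r).card ≤ 2 := by linarith
    have hkey : (1 / 2 : ℝ) ≤ 1 / ((n : ℝ) - (U r).card) := by
      apply one_div_le_one_div_of_le <;> linarith
    have hsumnn : (0 : ℝ) ≤ ∑ j ∈ U r, 1 / (Δ j) ^ 2 := by
      apply Finset.sum_nonneg; intro j _; positivity
    have : (1 / 2 : ℝ) * (4 * ((n : ℝ) - 2)) ≤
        (1 / ((n : ℝ) - (U r).card)) * ∑ j ∈ U r, 1 / (Δ j) ^ 2 := by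
      apply mul_le_mul hkey hsum (by linarith) (by linarith)
    linarith
  -- Lbar 12 ≥ 2730 (n - 2)
  have hL12 : 2730 * ((n : ℝ) - 2) ≤ Lbar 12 := by
    have c0 : (0 : ℝ) ≤ (n : ℝ) - 2 := by linarith
    have s6 := hstep 6 (hsub3 5 (hL7 6 (by norm_num)))
    have s7 := hstep 7 (hsub3 6 (hL7 7 (by norm_num)))
    have s8 := hstep 8 (hsub3 7 (hL7 8 (by norm_num)))
    have s9 := hstep 9 (hsub3 8 (hL7 9 (by norm_num)))
    have s10 := hstep 10 (hsub3 9 (hL7 10 (by norm_num)))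
    have s11 := hstep 11 (hsub3 10 (hL7 11 (by norm_num)))
    have h6 : (0 : ℝ) ≤ Lbar 6 := by linarith [hL1 6]
    linarith
  have hL12' : 450 * (n : ℝ) ≤ Lbar 12 := by linarith
  -- U 12 = Icc 2 n
  have hU12 : U 12 = Finset.Icc 2 n := by
    rw [hU 11]
    apply Finset.filter_true_of_mem
    intro j hj
    have hLpos : (0 : ℝ) < Lbar 12 := by linarith [hL1 12]
    have hsL : (0 : ℝ) < Real.sqrt (Lbar 12) := Real.sqrt_pos.2 hLpos
    rcases Nat.lt_or_ge j 3 with h | h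
    · have hj2 : j = 2 := by simp only [Finset.mem_Icc] at hj; omega
      subst hj2
      rw [hΔ2]
      have hnpos : (0 : ℝ) < Real.sqrt n := Real.sqrt_pos.2 (by linarith)
      rw [div_le_div_iff₀ hsL hnpos]
      have h1 : Real.sqrt (450 * n) ≤ Real.sqrt (Lbar 12) := Real.sqrt_le_sqrt hL12'
      have heq : Real.sqrt (450 * n) = 15 * Real.sqrt 2 * Real.sqrt n := by
        rw [show (450 : ℝ) * n = 15 ^ 2 * (2 * n) by ring,
          Real.sqrt_mul (by positivity), Real.sqrt_sq (by norm_num),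
          Real.sqrt_mul (by norm_num)]
        ring
      linarith
    · have hj3 : j ∈ Finset.Icc 3 n := by
        simp only [Finset.mem_Icc] at hj ⊢; omega
      rw [hΔi j hj3]
      have h1800 : (1800 : ℝ) ≤ Lbar 12 := by linarith
      rw [div_le_iff₀ hsL]
      have h1 : Real.sqrt 1800 ≤ Real.sqrt (Lbar 12) := Real.sqrt_le_sqrt h1800
      have heq : Real.sqrt 1800 = 30 * Real.sqrt 2 := by
        rw [show (1800 : ℝ) = 30 ^ 2 * 2 by norm_num, Real.sqrt_mul (by positivity),
          Real.sqrt_sq (by norm_num)]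
      linarith
  constructor
  · by_contra h
    push_neg at h
    exact hRleast 12 (by omega) hU12
  · rw [hΔ2, one_div_one_div]
    rw [Real.logb, Real.logb, Real.log_sqrt (by positivity)]
    ring
end

section
/- Let T be a finite set of size N, let O₁, …, O_B be nonempty pairwise disjoint sets with T = O₁ ∪ … ∪ O_B, set S_s := O_s ∪ O_{s+1} ∪ … ∪ O_B, and let w : T → [0, ∞). Then ∑_{s=1}^{B} (|O_s|/|S_s|) · ∑_{t=1}^{s} ∑_{j ∈ O_t} w_j ≤ min( ∑_{k=1}^{N} 1/k , B ) · ∑_{j ∈ T} w_j. In particular, ∑_{s=1}^{B} |O_s|/|S_s| ≤ ∑_{k=1}^{N} 1/k. -/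
/-!
Write `H n = ∑_{k=1}^n 1/k` and `m s = |S s|`. Since `S s` is the disjoint union of `O s` and
`S (s+1)`, the ratio `|O s|/|S s|` equals `(m s - m (s+1)) / m s`, which is at most
`H (m s) - H (m (s+1))` because each of the `m s - m (s+1)` terms `1/k` of that difference is
at least `1 / m s`. The sum over `s` telescopes to `H (m 1) - H (m (B+1)) = H N`. The bound by
`B` holds because each ratio is at most `1`, and the weighted inequality follows since every
prefix weight `∑_{t ≤ s} ∑_{j ∈ O t} w j` is at most the total weight.
-/

open Finset

lemma sub_div_le_sum_Ioc_one_div {m n : ℕ} (hmn : m ≤ n) :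
    ((n : ℝ) - m) / n ≤ ∑ k ∈ Ioc m n, (1 : ℝ) / k := by
  have hterm : ∀ k ∈ Ioc m n, (1 : ℝ) / n ≤ 1 / k := by
    intro k hk
    obtain ⟨hmk, hkn⟩ := mem_Ioc.mp hk
    gcongr
    exact_mod_cast Nat.zero_lt_of_lt hmk
  calc ((n : ℝ) - m) / n = #(Ioc m n) • ((1 : ℝ) / n) := by
        rw [Nat.card_Ioc, nsmul_eq_mul, Nat.cast_sub hmn]
        ring
    _ ≤ ∑ k ∈ Ioc m n, (1 : ℝ) / k := card_nsmul_le_sum _ _ _ hterm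

lemma sum_Ico_sub_div_le_sum_Ioc_one_div {m : ℕ → ℕ} (hm : Antitone m) {a b : ℕ}
    (hab : a ≤ b) :
    ∑ s ∈ Ico a b, ((m s : ℝ) - m (s + 1)) / m s ≤ ∑ k ∈ Ioc (m b) (m a), (1 : ℝ) / k := by
  induction b, hab using Nat.le_induction with
  | base => simp
  | succ b hab ih =>
    rw [sum_Ico_succ_top hab, ← sum_Ioc_consecutive _ (hm b.le_succ) (hm hab)]
    linarith [sub_div_le_sum_Ioc_one_div (hm b.le_succ)]

lemma sum_sum_le_sum_biUnion {ι κ : Type*} [DecidableEq ι] {O : κ → Finset ι} {I J : Finset κ}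
    (hIJ : I ⊆ J) (hO : (J : Set κ).PairwiseDisjoint O) {w : ι → ℝ}
    (hw : ∀ j ∈ J.biUnion O, 0 ≤ w j) :
    ∑ t ∈ I, ∑ j ∈ O t, w j ≤ ∑ j ∈ J.biUnion O, w j := by
  rw [← sum_biUnion (hO.subset (coe_subset.mpr hIJ))]
  exact sum_le_sum_of_subset_of_nonneg (biUnion_subset_biUnion_of_subset_left O hIJ)
    fun j hj _ => hw j hj

lemma antitone_biUnion_Icc {ι : Type*} [DecidableEq ι] (O : ℕ → Finset ι) (B : ℕ) :
    Antitone fun s => (Icc s B).biUnion O :=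
  fun _ _ hst => biUnion_subset_biUnion_of_subset_left O (Icc_subset_Icc_left hst)

lemma card_add_card_biUnion_Icc_succ {ι : Type*} [DecidableEq ι] {O : ℕ → Finset ι} {s B : ℕ}
    (hO : (Icc s B : Set ℕ).PairwiseDisjoint O) (hs : s ≤ B) :
    #(O s) + #((Icc (s + 1) B).biUnion O) = #((Icc s B).biUnion O) := by
  rw [← insert_Icc_add_one_left_eq_Icc hs, biUnion_insert, card_union_of_disjoint]
  exact (disjoint_biUnion_right _ _ _).mpr fun t ht => hO (by simp [hs])
    (mem_coe.mpr (Icc_subset_Icc_left s.le_succ ht)) (Nat.lt_of_succ_le (mem_Icc.mp ht).1).ne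

lemma sum_card_div_card_biUnion_Icc_le {ι : Type*} [DecidableEq ι] {O : ℕ → Finset ι} {B : ℕ}
    (hO : (Icc 1 B : Set ℕ).PairwiseDisjoint O) :
    ∑ s ∈ Icc 1 B, (#(O s) : ℝ) / #((Icc s B).biUnion O)
      ≤ ∑ k ∈ Icc 1 #((Icc 1 B).biUnion O), (1 : ℝ) / k := by
  set m : ℕ → ℕ := fun s => #((Icc s B).biUnion O)
  have hm : Antitone m := fun _ _ hst => card_le_card (antitone_biUnion_Icc O B hst)
  have hcard : ∀ s ∈ Icc 1 B, (#(O s) : ℝ) = m s - m (s + 1) := by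
    intro s hs
    obtain ⟨h1s, hsB⟩ := mem_Icc.mp hs
    rw [eq_sub_iff_add_eq, ← Nat.cast_add, card_add_card_biUnion_Icc_succ
      (hO.subset (coe_subset.mpr (Icc_subset_Icc_left h1s))) hsB]
  calc ∑ s ∈ Icc 1 B, (#(O s) : ℝ) / m s
      = ∑ s ∈ Ico 1 (B + 1), ((m s : ℝ) - m (s + 1)) / m s := by
        rw [Ico_add_one_right_eq_Icc]
        exact sum_congr rfl fun s hs => by rw [hcard s hs]
    _ ≤ ∑ k ∈ Ioc (m (B + 1)) (m 1), (1 : ℝ) / k :=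
        sum_Ico_sub_div_le_sum_Ioc_one_div hm (by omega)
    _ = ∑ k ∈ Icc 1 (m 1), (1 : ℝ) / k := by
        simp only [m, Icc_eq_empty_of_lt (Nat.lt_succ_self B), biUnion_empty, card_empty,
          ← Icc_add_one_left_eq_Ioc, zero_add]

lemma sum_card_div_card_biUnion_Icc_le_self {ι : Type*} [DecidableEq ι] (O : ℕ → Finset ι)
    (B : ℕ) : ∑ s ∈ Icc 1 B, (#(O s) : ℝ) / #((Icc s B).biUnion O) ≤ B :=
  calc ∑ s ∈ Icc 1 B, (#(O s) : ℝ) / #((Icc s B).biUnion O) ≤ ∑ s ∈ Icc 1 B, 1 :=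
        sum_le_sum fun s hs => div_le_one_of_le₀ (mod_cast card_le_card
          (subset_biUnion_of_mem O (left_mem_Icc.mpr (mem_Icc.mp hs).2))) (by positivity)
    _ = B := by simp

theorem elimination_weight_inequality_general {ι : Type*} [DecidableEq ι]
    (T : Finset ι) (B : ℕ)
    (O : ℕ → Finset ι)
    (hOdisj : ∀ s ∈ Finset.Icc 1 B, ∀ t ∈ Finset.Icc 1 B, s ≠ t → Disjoint (O s) (O t))
    (hOunion : T = (Finset.Icc 1 B).biUnion O)
    (S : ℕ → Finset ι)
    (hS : ∀ s, S s = (Finset.Icc s B).biUnion O)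
    (w : ι → ℝ) (hw : ∀ j ∈ T, 0 ≤ w j)
    (N : ℕ) (hN : N = T.card) :
    (∑ s ∈ Finset.Icc 1 B,
        ((O s).card : ℝ) / (S s).card * ∑ t ∈ Finset.Icc 1 s, ∑ j ∈ O t, w j)
      ≤ min (∑ k ∈ Finset.Icc 1 N, (1 : ℝ) / k) (B : ℝ) * ∑ j ∈ T, w j
    ∧ (∑ s ∈ Finset.Icc 1 B, ((O s).card : ℝ) / (S s).card)
      ≤ ∑ k ∈ Finset.Icc 1 N, (1 : ℝ) / k := by
  have hO : (Icc 1 B : Set ℕ).PairwiseDisjoint O := hOdisj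
  obtain rfl : S = fun s => (Icc s B).biUnion O := funext hS
  subst hOunion hN
  have hharm := sum_card_div_card_biUnion_Icc_le hO
  have hprefix : ∀ s ∈ Icc 1 B, ∑ t ∈ Icc 1 s, ∑ j ∈ O t, w j ≤ ∑ j ∈ (Icc 1 B).biUnion O, w j :=
    fun s hs => sum_sum_le_sum_biUnion (Icc_subset_Icc_right (mem_Icc.mp hs).2) hO hw
  refine ⟨?_, hharm⟩
  calc _ ≤ ∑ s ∈ Icc 1 B, (#(O s) : ℝ) / #((Icc s B).biUnion O) * ∑ j ∈ (Icc 1 B).biUnion O, w j :=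
        sum_le_sum fun s hs => mul_le_mul_of_nonneg_left (hprefix s hs) (by positivity)
    _ ≤ _ := by
        rw [← sum_mul]
        exact mul_le_mul_of_nonneg_right
          (le_min hharm (sum_card_div_card_biUnion_Icc_le_self O B)) (sum_nonneg hw)

theorem elimination_weight_inequality {ι : Type*} [DecidableEq ι]
    (T : Finset ι) (B : ℕ) (hB : 1 ≤ B)
    (O : ℕ → Finset ι)
    (hOnonempty : ∀ s ∈ Finset.Icc 1 B, (O s).Nonempty)
    (hOdisj : ∀ s ∈ Finset.Icc 1 B, ∀ t ∈ Finset.Icc 1 B, s ≠ t → Disjoint (O s) (O t))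
    (hOunion : T = (Finset.Icc 1 B).biUnion O)
    (S : ℕ → Finset ι)
    (hS : ∀ s, S s = (Finset.Icc s B).biUnion O)
    (w : ι → ℝ) (hw : ∀ j ∈ T, 0 ≤ w j)
    (N : ℕ) (hN : N = T.card) :
    (∑ s ∈ Finset.Icc 1 B,
        ((O s).card : ℝ) / (S s).card * ∑ t ∈ Finset.Icc 1 s, ∑ j ∈ O t, w j)
      ≤ min (∑ k ∈ Finset.Icc 1 N, (1 : ℝ) / k) (B : ℝ) * ∑ j ∈ T, w j
    ∧ (∑ s ∈ Finset.Icc 1 B, ((O s).card : ℝ) / (S s).card)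
      ≤ ∑ k ∈ Finset.Icc 1 N, (1 : ℝ) / k :=
  elimination_weight_inequality_general T B O hOdisj hOunion S hS w hw N hN
end

section
/- For every real L > 0, L · ρ(𝒴({z ∈ X : Δ_z ≤ 15/√L})) ≤ 900 · ψ*. (Lemma 4.1 of the paper.) -/
open Matrix

noncomputable section

/-- The probability simplex of design weights over the arm set `X`. -/
def designSimplex {d : ℕ} (X : Finset (Fin d → ℝ)) : Set ((Fin d → ℝ) → ℝ) :=
  {l | (∀ x, 0 ≤ l x) ∧ ∑ x ∈ X, l x = 1}

/-- The design matrix `A(λ) = ∑_{x ∈ X} λ_x x xᵀ`. -/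
def designMat {d : ℕ} (X : Finset (Fin d → ℝ)) (l : (Fin d → ℝ) → ℝ) :
    Matrix (Fin d) (Fin d) ℝ :=
  ∑ x ∈ X, l x • Matrix.vecMulVec x x

/-- The quadratic form `y ↦ yᵀ A(λ)⁻¹ y`. -/
def quadInv {d : ℕ} (X : Finset (Fin d → ℝ)) (l : (Fin d → ℝ) → ℝ)
    (y : Fin d → ℝ) : ℝ :=
  y ⬝ᵥ (designMat X l)⁻¹.mulVec y

/-- The optimal design value `ρ(A) = inf_{λ : A(λ) invertible} max_{y ∈ A} yᵀA(λ)⁻¹y`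
(the maximum over the empty set being `0`). -/
def rho {d : ℕ} (X : Finset (Fin d → ℝ)) (A : Set (Fin d → ℝ)) : ℝ :=
  sInf {v | ∃ l ∈ designSimplex X, IsUnit (designMat X l).det ∧
    v = sSup (insert 0 (quadInv X l '' A))}

/-- `𝒴(S) = {x - x' : x, x' ∈ S, x ≠ x'}`. -/
def Yset {d : ℕ} (S : Set (Fin d → ℝ)) : Set (Fin d → ℝ) :=
  {y | ∃ x ∈ S, ∃ x' ∈ S, x ≠ x' ∧ y = x - x'}

/-- `𝒴*(S) = {x* - x : x ∈ S, x ≠ x*}`. -/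
def YstarSet {d : ℕ} (xstar : Fin d → ℝ) (S : Set (Fin d → ℝ)) : Set (Fin d → ℝ) :=
  (fun x => xstar - x) '' (S \ {xstar})

/-- `ψ* = inf_{λ : A(λ) invertible} max_{x ∈ X, x ≠ x*} (x-x*)ᵀA(λ)⁻¹(x-x*)/Δ_x²`. -/
def psiStar {d : ℕ} (X : Finset (Fin d → ℝ)) (θstar xstar : Fin d → ℝ) : ℝ :=
  sInf {v | ∃ l ∈ designSimplex X, IsUnit (designMat X l).det ∧
    v = sSup (insert 0
      ((fun x => quadInv X l (x - xstar) / (θstar ⬝ᵥ (xstar - x)) ^ 2) ''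
        ((X : Set (Fin d → ℝ)) \ {xstar})))}

/-!
Fix a design `λ`. Since `A(λ)⁻¹` is positive semidefinite, its quadratic form `q` satisfies
`q(z - z') ≤ 2 q(z - x*) + 2 q(z' - x*)`. Writing `ψ(λ)` for the objective of `ψ*` at `λ`, every arm
with gap `Δ_z ≤ 15/√L` has `q(z - x*) ≤ Δ_z² ψ(λ) ≤ 225 ψ(λ) / L`, so every `y ∈ 𝒴` has
`L q(y) ≤ 900 ψ(λ)`. Both `ρ` and `ψ*` are infima over the same set of designs, so the bound passes
to the infima.
-/

theorem Matrix.PosSemidef.dotProduct_mulVec_sub_le {n : Type*} [Fintype n]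
    {M : Matrix n n ℝ} (hM : M.PosSemidef) (u v : n → ℝ) :
    (u - v) ⬝ᵥ M *ᵥ (u - v) ≤ 2 * (u ⬝ᵥ M *ᵥ u) + 2 * (v ⬝ᵥ M *ᵥ v) := by
  have parallelogram : (u + v) ⬝ᵥ M *ᵥ (u + v) + (u - v) ⬝ᵥ M *ᵥ (u - v)
      = 2 * (u ⬝ᵥ M *ᵥ u) + 2 * (v ⬝ᵥ M *ᵥ v) := by
    simp only [mulVec_add, mulVec_sub, dotProduct_add, dotProduct_sub, add_dotProduct,
      sub_dotProduct]
    ring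
  have := hM.dotProduct_mulVec_nonneg (u + v)
  rw [star_trivial] at this
  linarith

theorem mul_csInf_image_le_mul_csInf_image {ι : Type*} {s : Set ι} {f g : ι → ℝ} {b c : ℝ}
    (hc : 0 ≤ c) (hb : 0 < b) (hf : ∀ i ∈ s, 0 ≤ f i) (hfg : ∀ i ∈ s, c * f i ≤ b * g i) :
    c * sInf (f '' s) ≤ b * sInf (g '' s) := by
  rcases s.eq_empty_or_nonempty with rfl | hs
  · simp
  rw [← div_le_iff₀' hb]
  refine le_csInf (hs.image g) ?_
  rintro _ ⟨i, hi, rfl⟩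
  have hbdd : BddBelow (f '' s) := ⟨0, by rintro _ ⟨j, hj, rfl⟩; exact hf j hj⟩
  rw [div_le_iff₀' hb]
  calc c * sInf (f '' s) ≤ c * f i := by gcongr; exact csInf_le hbdd ⟨i, hi, rfl⟩
    _ ≤ b * g i := hfg i hi

section Design

variable {d : ℕ} (X : Finset (Fin d → ℝ))

def feasibleDesigns : Set ((Fin d → ℝ) → ℝ) :=
  {l | l ∈ designSimplex X ∧ IsUnit (designMat X l).det}

def rhoAt (A : Set (Fin d → ℝ)) (l : (Fin d → ℝ) → ℝ) : ℝ :=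
  sSup (insert 0 (quadInv X l '' A))

def psiStarAt (θstar xstar : Fin d → ℝ) (l : (Fin d → ℝ) → ℝ) : ℝ :=
  sSup (insert 0
    ((fun x => quadInv X l (x - xstar) / (θstar ⬝ᵥ (xstar - x)) ^ 2) ''
      ((X : Set (Fin d → ℝ)) \ {xstar})))

theorem rho_eq_sInf_rhoAt (A : Set (Fin d → ℝ)) :
    rho X A = sInf (rhoAt X A '' feasibleDesigns X) := by
  simp only [rho, rhoAt, feasibleDesigns, Set.image, Set.mem_ofPred_eq, and_assoc, eq_comm]

theorem psiStar_eq_sInf_psiStarAt (θstar xstar : Fin d → ℝ) :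
    psiStar X θstar xstar = sInf (psiStarAt X θstar xstar '' feasibleDesigns X) := by
  simp only [psiStar, psiStarAt, feasibleDesigns, Set.image, Set.mem_ofPred_eq, and_assoc,
    eq_comm]

theorem rhoAt_nonneg (A : Set (Fin d → ℝ)) (l : (Fin d → ℝ) → ℝ) : 0 ≤ rhoAt X A l :=
  Real.sSup_nonneg' ⟨0, Set.mem_insert _ _, le_rfl⟩

variable {X} {l : (Fin d → ℝ) → ℝ}

theorem designMat_posSemidef (hl : ∀ x, 0 ≤ l x) : (designMat X l).PosSemidef :=
  posSemidef_sum X fun x _ => by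
    simpa using (posSemidef_vecMulVec_self_star x).smul (hl x)

theorem quadInv_sub_le (hl : ∀ x, 0 ≤ l x) (u v : Fin d → ℝ) :
    quadInv X l (u - v) ≤ 2 * quadInv X l u + 2 * quadInv X l v :=
  (designMat_posSemidef hl).inv.dotProduct_mulVec_sub_le u v

variable {θstar xstar : Fin d → ℝ}
  (hmax : ∀ x ∈ X, x ≠ xstar → θstar ⬝ᵥ x < θstar ⬝ᵥ xstar)
include hmax

theorem gap_nonneg {x : Fin d → ℝ} (hx : x ∈ X) : 0 ≤ θstar ⬝ᵥ (xstar - x) := by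
  rcases eq_or_ne x xstar with rfl | hne
  · simp
  · rw [dotProduct_sub, sub_nonneg]
    exact (hmax x hx hne).le

theorem quadInv_le_gap_sq_mul_psiStarAt {z : Fin d → ℝ} (hz : z ∈ X) :
    quadInv X l (z - xstar) ≤ (θstar ⬝ᵥ (xstar - z)) ^ 2 * psiStarAt X θstar xstar l := by
  rcases eq_or_ne z xstar with rfl | hne
  · simp [quadInv]
  have hgap : 0 < θstar ⬝ᵥ (xstar - z) := by
    rw [dotProduct_sub, sub_pos]
    exact hmax z hz hne
  rw [← div_le_iff₀' (by positivity)]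
  exact le_csSup ((((X.finite_toSet.sdiff).image _).insert 0).bddAbove)
    (Set.mem_insert_of_mem _ ⟨z, ⟨hz, hne⟩, rfl⟩)

theorem mul_rhoAt_le (hl : ∀ x, 0 ≤ l x) {L : ℝ} (hL : 0 < L) :
    L * rhoAt X (Yset {z | z ∈ X ∧ θstar ⬝ᵥ (xstar - z) ≤ 15 / Real.sqrt L}) l
      ≤ 900 * psiStarAt X θstar xstar l := by
  set ψ := psiStarAt X θstar xstar l
  have hψ : 0 ≤ ψ := Real.sSup_nonneg' ⟨0, Set.mem_insert _ _, le_rfl⟩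
  have near : ∀ z ∈ X, θstar ⬝ᵥ (xstar - z) ≤ 15 / Real.sqrt L →
      L * quadInv X l (z - xstar) ≤ 225 * ψ := by
    intro z hz hgap
    have hgap_sq : L * (θstar ⬝ᵥ (xstar - z)) ^ 2 ≤ 225 := by
      have := pow_le_pow_left₀ (gap_nonneg hmax hz) hgap 2
      rwa [div_pow, Real.sq_sqrt hL.le, le_div_iff₀ hL, mul_comm,
        show (15 : ℝ) ^ 2 = 225 by norm_num] at this
    calc L * quadInv X l (z - xstar)
        ≤ L * ((θstar ⬝ᵥ (xstar - z)) ^ 2 * ψ) := by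
          gcongr; exact quadInv_le_gap_sq_mul_psiStarAt hmax hz
      _ = L * (θstar ⬝ᵥ (xstar - z)) ^ 2 * ψ := by ring
      _ ≤ 225 * ψ := by gcongr
  suffices rhoAt X _ l ≤ 900 * ψ / L by rwa [le_div_iff₀' hL] at this
  refine csSup_le (Set.insert_nonempty _ _) ?_
  rintro _ (rfl | ⟨_, ⟨z, ⟨hz, hzgap⟩, z', ⟨hz', hz'gap⟩, -, rfl⟩, rfl⟩)
  · positivity
  rw [le_div_iff₀' hL, ← sub_sub_sub_cancel_right z z' xstar]
  have := mul_le_mul_of_nonneg_left (quadInv_sub_le (X := X) hl (z - xstar) (z' - xstar)) hL.le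
  linarith [near z hz hzgap, near z' hz' hz'gap]

end Design

theorem lemma_partial_complexity_general {d : ℕ} (X : Finset (Fin d → ℝ))
    (θstar xstar : Fin d → ℝ)
    (hmax : ∀ x ∈ X, x ≠ xstar → θstar ⬝ᵥ x < θstar ⬝ᵥ xstar)
    (L : ℝ) (hL : 0 < L) :
    L * rho X (Yset {z | z ∈ X ∧ θstar ⬝ᵥ (xstar - z) ≤ 15 / Real.sqrt L})
      ≤ 900 * psiStar X θstar xstar := by
  rw [rho_eq_sInf_rhoAt, psiStar_eq_sInf_psiStarAt]
  exact mul_csInf_image_le_mul_csInf_image hL.le (by norm_num) (fun l _ => rhoAt_nonneg X _ l)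
    fun l (hl : l ∈ feasibleDesigns X) => mul_rhoAt_le hmax hl.1.1 hL

theorem lemma_partial_complexity {d : ℕ} (X : Finset (Fin d → ℝ))
    (θstar xstar : Fin d → ℝ)
    (hspan : Submodule.span ℝ (X : Set (Fin d → ℝ)) = ⊤)
    (hnorm : ∀ x ∈ X, x ⬝ᵥ x ≤ 1)
    (hxstar : xstar ∈ X)
    (hmax : ∀ x ∈ X, x ≠ xstar → θstar ⬝ᵥ x < θstar ⬝ᵥ xstar)
    (L : ℝ) (hL : 0 < L) :
    L * rho X (Yset {z | z ∈ X ∧ θstar ⬝ᵥ (xstar - z) ≤ 15 / Real.sqrt L})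
      ≤ 900 * psiStar X θstar xstar :=
  lemma_partial_complexity_general X θstar xstar hmax L hL
end
end

section
/- For every r with 1 ≤ r < R_I, if U_{r+1} = U_r then H_{r+1} ≥ (5/4)·H_r. -/
open Matrix

noncomputable section

/-!
Once `U_{r+1} = U_r`, every term of `H_{r+1}` with `T̄_r < t ≤ T̄_{r+1}` equals
`4^t ρ` with `ρ = ρ(𝒴(X ∖ U_r))`, so `H_{r+1} = H_r + (4^{T̄_{r+1}+1} - 4^{T̄_r+1}) ρ / 3`,
while the choice of `T̄_{r+1}` as `⌊log₄ L̂_{r+1}⌋` gives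
`H_r / ρ < 4^{T̄_{r+1}+1} - 4^{T̄_r+1}`; hence even `H_{r+1} ≥ (4/3) H_r`.
Dividing by `ρ` needs `ρ > 0`: as `‖x‖ ≤ 1` on `X`, `A(λ) ≼ I`, so `yᵀA(λ)⁻¹y ≥ ‖y‖²`.
-/

lemma dotProduct_designMat_mulVec {d : ℕ} (X : Finset (Fin d → ℝ)) (l : (Fin d → ℝ) → ℝ)
    (u v : Fin d → ℝ) :
    u ⬝ᵥ designMat X l *ᵥ v = ∑ x ∈ X, l x * ((x ⬝ᵥ u) * (x ⬝ᵥ v)) := by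
  simp only [designMat, Matrix.sum_mulVec, Matrix.smul_mulVec, vecMulVec_mulVec,
    op_smul_eq_smul, dotProduct_sum, dotProduct_smul, smul_eq_mul]
  exact Finset.sum_congr rfl fun x _ => by rw [dotProduct_comm u x]; ring

lemma dotProduct_self_le_quadInv {d : ℕ} {X : Finset (Fin d → ℝ)}
    (hnorm : ∀ x ∈ X, x ⬝ᵥ x ≤ 1) {l : (Fin d → ℝ) → ℝ} (hl : l ∈ designSimplex X)
    (hdet : IsUnit (designMat X l).det) (y : Fin d → ℝ) : y ⬝ᵥ y ≤ quadInv X l y := by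
  set v := (designMat X l)⁻¹ *ᵥ y
  have hAv : designMat X l *ᵥ v = y := by
    rw [Matrix.mulVec_mulVec, Matrix.mul_nonsing_inv _ hdet, Matrix.one_mulVec]
  have hquad : quadInv X l y = v ⬝ᵥ designMat X l *ᵥ v := by
    rw [hAv, dotProduct_comm]; rfl
  have hyy : y ⬝ᵥ y = y ⬝ᵥ designMat X l *ᵥ v := by rw [hAv]
  -- Cauchy–Schwarz for the positive semidefinite form `(u, w) ↦ uᵀ A(λ) w`
  have hcs : (y ⬝ᵥ y) ^ 2 ≤ (y ⬝ᵥ designMat X l *ᵥ y) * quadInv X l y := by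
    rw [hyy, hquad, dotProduct_designMat_mulVec, dotProduct_designMat_mulVec,
      dotProduct_designMat_mulVec]
    refine Finset.sum_sq_le_sum_mul_sum_of_sq_le_mul X
      (fun x _ => mul_nonneg (hl.1 x) (mul_self_nonneg _))
      (fun x _ => mul_nonneg (hl.1 x) (mul_self_nonneg _)) fun x _ => le_of_eq ?_
    ring
  have hA_le : y ⬝ᵥ designMat X l *ᵥ y ≤ y ⬝ᵥ y := by
    rw [dotProduct_designMat_mulVec]
    calc ∑ x ∈ X, l x * ((x ⬝ᵥ y) * (x ⬝ᵥ y)) ≤ ∑ x ∈ X, l x * (y ⬝ᵥ y) := by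
          refine Finset.sum_le_sum fun x hx => mul_le_mul_of_nonneg_left ?_ (hl.1 x)
          calc (x ⬝ᵥ y) * (x ⬝ᵥ y) ≤ (x ⬝ᵥ x) * (y ⬝ᵥ y) := by
                simpa only [dotProduct, sq] using Finset.sum_mul_sq_le_sq_mul_sq Finset.univ x y
            _ ≤ y ⬝ᵥ y := mul_le_of_le_one_left (dotProduct_self_star_nonneg y) (hnorm x hx)
      _ = y ⬝ᵥ y := by rw [← Finset.sum_mul, hl.2, one_mul]
  have hq_nonneg : 0 ≤ quadInv X l y := by
    rw [hquad, dotProduct_designMat_mulVec]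
    exact Finset.sum_nonneg fun x _ => mul_nonneg (hl.1 x) (mul_self_nonneg _)
  nlinarith [dotProduct_self_star_nonneg y]

lemma sSup_insert_zero_nonneg (S : Set ℝ) : 0 ≤ sSup (insert 0 S) := by
  by_cases h : BddAbove (insert 0 S)
  · exact le_csSup h (Set.mem_insert 0 S)
  · rw [csSup_of_not_bddAbove h, Real.sSup_empty]

lemma rho_nonneg {d : ℕ} (X : Finset (Fin d → ℝ)) (A : Set (Fin d → ℝ)) : 0 ≤ rho X A :=
  Real.sInf_nonneg fun _ ⟨_, _, _, hv⟩ => hv ▸ sSup_insert_zero_nonneg _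

lemma rho_eq_zero_of_not_exists {d : ℕ} {X : Finset (Fin d → ℝ)}
    (h : ¬∃ l ∈ designSimplex X, IsUnit (designMat X l).det) (A : Set (Fin d → ℝ)) :
    rho X A = 0 := by
  rw [rho]
  convert Real.sInf_empty
  exact Set.eq_empty_of_forall_notMem fun _ ⟨l, hl, hdet, _⟩ => h ⟨l, hl, hdet⟩

lemma dotProduct_self_le_rho {d : ℕ} {X : Finset (Fin d → ℝ)}
    (hnorm : ∀ x ∈ X, x ⬝ᵥ x ≤ 1) (hex : ∃ l ∈ designSimplex X, IsUnit (designMat X l).det)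
    {A : Set (Fin d → ℝ)} (hA : A.Finite) {y : Fin d → ℝ} (hy : y ∈ A) :
    y ⬝ᵥ y ≤ rho X A := by
  obtain ⟨l₀, hl₀, hdet₀⟩ := hex
  refine le_csInf ⟨_, l₀, hl₀, hdet₀, rfl⟩ ?_
  rintro _ ⟨l, hl, hdet, rfl⟩
  calc y ⬝ᵥ y ≤ quadInv X l y := dotProduct_self_le_quadInv hnorm hl hdet y
    _ ≤ _ := le_csSup ((hA.image _).insert 0).bddAbove
      (Set.mem_insert_of_mem _ (Set.mem_image_of_mem _ hy))

lemma Yset_finite {d : ℕ} {S : Set (Fin d → ℝ)} (hS : S.Finite) : (Yset S).Finite :=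
  (hS.image2 (· - ·) hS).subset fun _ ⟨_, hx, _, hx', _, hy⟩ =>
    hy ▸ Set.mem_image2_of_mem hx hx'

lemma rho_Yset_pos {d : ℕ} {X : Finset (Fin d → ℝ)}
    (hnorm : ∀ x ∈ X, x ⬝ᵥ x ≤ 1) (hex : ∃ l ∈ designSimplex X, IsUnit (designMat X l).det)
    {S : Set (Fin d → ℝ)} (hS : S.Finite) {x x' : Fin d → ℝ} (hx : x ∈ S) (hx' : x' ∈ S)
    (hne : x ≠ x') : 0 < rho X (Yset S) :=
  calc (0 : ℝ) < (x - x') ⬝ᵥ (x - x') :=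
        dotProduct_self_star_pos_iff.2 (sub_ne_zero.2 hne)
    _ ≤ rho X (Yset S) :=
        dotProduct_self_le_rho hnorm hex (Yset_finite hS) ⟨x, hx, x', hx', hne, rfl⟩

lemma sqrt_four_pow (n : ℕ) : √((4 : ℝ) ^ n) = 2 ^ n := by
  rw [show (4 : ℝ) ^ n = (2 ^ n) ^ 2 by rw [← pow_mul, mul_comm, pow_mul]; norm_num]
  exact Real.sqrt_sq (by positivity)

lemma sum_Icc_four_pow_mul_of_eq {g : ℕ → ℝ} {c : ℝ} {T T' : ℕ} (hTT : T ≤ T')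
    (hg : ∀ t, T < t → g t = c) :
    ∑ t ∈ Finset.Icc 1 T', (4 : ℝ) ^ t * g t
      = ∑ t ∈ Finset.Icc 1 T, (4 : ℝ) ^ t * g t + ((4 : ℝ) ^ (T' + 1) - 4 ^ (T + 1)) / 3 * c := by
  have hIoc : ∀ n, Finset.Icc 1 n = Finset.Ioc 0 n := Finset.Icc_add_one_left_eq_Ioc 0
  rw [hIoc, hIoc, ← Finset.sum_Ioc_consecutive _ (Nat.zero_le T) hTT]
  congr 1
  rw [← Finset.Ico_add_one_add_one_eq_Ioc T T',
    Finset.sum_congr rfl fun t ht => by rw [hg t (Finset.mem_Ico.1 ht).1], ← Finset.sum_mul,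
    geom_sum_Ico (by norm_num) (by omega)]
  norm_num

section Elimination

variable {d : ℕ} {X : Finset (Fin d → ℝ)} {θstar xstar : Fin d → ℝ}

lemma filter_gap_subset_erase {c : ℝ} (hc : 0 ≤ c) :
    X.filter (fun x => c < θstar ⬝ᵥ (xstar - x)) ⊆ X.erase xstar := fun x hx => by
  obtain ⟨hxX, hgap⟩ := Finset.mem_filter.1 hx
  refine Finset.mem_erase.2 ⟨?_, hxX⟩
  rintro rfl
  simp only [sub_self, dotProduct_zero] at hgap
  linarith

lemma setOf_mem_and_gap_eq {U : Finset (Fin d → ℝ)} {T t : ℕ}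
    (hU : U = X.filter (fun x => 15 / √((4 : ℝ) ^ T) < θstar ⬝ᵥ (xstar - x))) (ht : T ≤ t) :
    {x | x ∈ U ∧ 15 / (2 : ℝ) ^ t < θstar ⬝ᵥ (xstar - x)} = ↑U := by
  refine Set.sep_eq_self_iff_mem_true.2 fun x hx => ?_
  rw [hU, Finset.mem_coe, Finset.mem_filter, sqrt_four_pow] at hx
  refine lt_of_le_of_lt ?_ hx.2
  gcongr
  norm_num

end Elimination

theorem linear_Hr_geometric_growth_general {d : ℕ} (X : Finset (Fin d → ℝ))
    (θstar xstar : Fin d → ℝ)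
    (hnorm : ∀ x ∈ X, x ⬝ᵥ x ≤ 1)
    (hxstar : xstar ∈ X)
    (Tbar : ℕ → ℕ) (Lbar Lhat : ℕ → ℝ) (U : ℕ → Finset (Fin d → ℝ)) (H : ℕ → ℝ)
    (R : ℕ)
    (hLbar : ∀ r, Lbar r = 4 ^ Tbar r)
    (hU : ∀ r, U r = X.filter (fun x => 15 / Real.sqrt (Lbar r) < θstar ⬝ᵥ (xstar - x)))
    (hH : ∀ r, H r = ∑ t ∈ Finset.Icc 1 (Tbar r), (4 : ℝ) ^ t *
      rho X (Yset ((X : Set (Fin d → ℝ)) \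
        {x | x ∈ U r ∧ 15 / 2 ^ t < θstar ⬝ᵥ (xstar - x)})))
    (hLhat : ∀ r, 1 ≤ r → r < R →
      Lhat (r + 1) = 4 * Lbar r + H r / rho X (Yset ((X : Set (Fin d → ℝ)) \ ↑(U r))))
    (hTsucc : ∀ r, 1 ≤ r → r < R →
      (4 : ℝ) ^ Tbar (r + 1) ≤ Lhat (r + 1) ∧ Lhat (r + 1) < (4 : ℝ) ^ (Tbar (r + 1) + 1))
    (hRleast : ∀ r, 1 ≤ r → r < R → U r ≠ X.erase xstar) :
    ∀ r, 1 ≤ r → r < R → U (r + 1) = U r → (5 / 4 : ℝ) * H r ≤ H (r + 1) := by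
  intro r hr1 hrR hUeq
  by_cases hex : ∃ l ∈ designSimplex X, IsUnit (designMat X l).det
  swap
  · -- every `ρ` is then `sInf ∅ = 0`
    simp [hH, rho_eq_zero_of_not_exists hex]
  set T := Tbar r
  set T' := Tbar (r + 1)
  set ρ := rho X (Yset ((X : Set (Fin d → ℝ)) \ ↑(U r)))
  have hUr : U r = X.filter (fun x => 15 / √((4 : ℝ) ^ T) < θstar ⬝ᵥ (xstar - x)) := by
    rw [hU, hLbar]
  have hUsub : U r ⊆ X.erase xstar := hUr ▸ filter_gap_subset_erase (by positivity)
  obtain ⟨x₀, hx₀, hx₀U⟩ :=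
    Finset.exists_of_ssubset (hUsub.ssubset_of_ne (hRleast r hr1 hrR))
  have hρ : 0 < ρ := rho_Yset_pos hnorm hex X.finite_toSet.sdiff
    ⟨hxstar, fun h => (Finset.mem_erase.1 (hUsub h)).1 rfl⟩
    ⟨Finset.mem_of_mem_erase hx₀, hx₀U⟩ (Finset.ne_of_mem_erase hx₀).symm
  have hHr : 0 ≤ H r :=
    hH r ▸ Finset.sum_nonneg fun t _ => mul_nonneg (by positivity) (rho_nonneg _ _)
  have hlt : (4 : ℝ) ^ (T + 1) + H r / ρ < 4 ^ (T' + 1) := by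
    have := (hTsucc r hr1 hrR).2
    rwa [hLhat r hr1 hrR, hLbar, ← pow_succ'] at this
  have hTT : T ≤ T' := by
    have : (4 : ℝ) ^ (T + 1) < 4 ^ (T' + 1) := by linarith [div_nonneg hHr hρ.le]
    have := (pow_lt_pow_iff_right₀ (by norm_num)).1 this
    omega
  have hsplit : H (r + 1) = H r + ((4 : ℝ) ^ (T' + 1) - 4 ^ (T + 1)) / 3 * ρ := by
    rw [hH, hH, hUeq]
    exact sum_Icc_four_pow_mul_of_eq hTT fun t ht => by rw [setOf_mem_and_gap_eq hUr ht.le]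
  have hHρ : H r < ((4 : ℝ) ^ (T' + 1) - 4 ^ (T + 1)) * ρ := by
    rw [← div_lt_iff₀ hρ]
    linarith
  linarith

theorem linear_Hr_geometric_growth {d : ℕ} (X : Finset (Fin d → ℝ))
    (θstar xstar : Fin d → ℝ)
    (hspan : Submodule.span ℝ (X : Set (Fin d → ℝ)) = ⊤)
    (hnorm : ∀ x ∈ X, x ⬝ᵥ x ≤ 1)
    (hxstar : xstar ∈ X)
    (hmax : ∀ x ∈ X, x ≠ xstar → θstar ⬝ᵥ x < θstar ⬝ᵥ xstar)
    (Tbar : ℕ → ℕ) (Lbar Lhat : ℕ → ℝ) (U : ℕ → Finset (Fin d → ℝ)) (H : ℕ → ℝ)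
    (R : ℕ) (hR1 : 1 ≤ R)
    (hT1 : Tbar 1 = 1)
    (hLbar : ∀ r, Lbar r = 4 ^ Tbar r)
    (hU : ∀ r, U r = X.filter (fun x => 15 / Real.sqrt (Lbar r) < θstar ⬝ᵥ (xstar - x)))
    (hH : ∀ r, H r = ∑ t ∈ Finset.Icc 1 (Tbar r), (4 : ℝ) ^ t *
      rho X (Yset ((X : Set (Fin d → ℝ)) \
        {x | x ∈ U r ∧ 15 / 2 ^ t < θstar ⬝ᵥ (xstar - x)})))
    (hLhat : ∀ r, 1 ≤ r → r < R →
      Lhat (r + 1) = 4 * Lbar r + H r / rho X (Yset ((X : Set (Fin d → ℝ)) \ ↑(U r))))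
    (hTsucc : ∀ r, 1 ≤ r → r < R →
      (4 : ℝ) ^ Tbar (r + 1) ≤ Lhat (r + 1) ∧ Lhat (r + 1) < (4 : ℝ) ^ (Tbar (r + 1) + 1))
    (hRmem : U R = X.erase xstar)
    (hRleast : ∀ r, 1 ≤ r → r < R → U r ≠ X.erase xstar) :
    ∀ r, 1 ≤ r → r < R → U (r + 1) = U r → (5 / 4 : ℝ) * H r ≤ H (r + 1) :=
  linear_Hr_geometric_growth_general X θstar xstar hnorm hxstar Tbar Lbar Lhat U H R hLbar hU hH
    hLhat hTsucc hRleast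

end
end
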